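/- Let T_h = Δ_1 + ... + Δ_h with Δ_j i.i.d. positive random variables such that P(Δ_1 > x) ≥ C x^{-β} for all large x, where β ∈ (0,1) and C > 0. Then for 0 < α < 1, E[T_h^{-α}] ≤ C' h^{-α/β} for some constant C' and all large h. -/

import Mathlib

/-!
Since `T_h ≥ max_{j<h} Δ_j`, independence and the tail bound (which, with a smaller
constant `c > 0`, holds for all `t ≥ 1`) give
`P(T_h ≤ t) ≤ (1 - c t^{-β})^h ≤ exp (-c h t^{-β}) ≤ m! (c h)^{-m} t^{β m}` for every `m`.
Split `T_h^{-α}` over the dyadic shells `2^k < T_h ≤ 2^{k+1}` up to the scale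
`u ≈ h^{1/β}` at which this small-ball bound becomes trivial. With `β m > α` the shell
contributions form a geometric series dominated by its last term, which, like the
contribution of `T_h > u`, is of order `u^{-α} = h^{-α/β}`.
-/

open MeasureTheory ProbabilityTheory Real Filter Finset
open scoped Nat

noncomputable def negMomentConst (α γ : ℝ) : ℝ := 1 + 2 ^ γ * 2 ^ (γ - α) / (2 ^ (γ - α) - 1)

lemma one_le_negMomentConst {α γ : ℝ} (hαγ : α < γ) : 1 ≤ negMomentConst α γ := by
  have hr : (1 : ℝ) < 2 ^ (γ - α) := one_lt_rpow (by norm_num) (by linarith)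
  have : 0 ≤ (2 : ℝ) ^ γ * 2 ^ (γ - α) / (2 ^ (γ - α) - 1) :=
    div_nonneg (by positivity) (by linarith)
  unfold negMomentConst
  linarith

lemma sum_dyadic_rpow_le {α γ : ℝ} (hαγ : α < γ) (L : ℕ) :
    ∑ k ∈ range L, ((2 : ℝ) ^ k) ^ (-α) * ((2 : ℝ) ^ (k + 1)) ^ γ ≤
      2 ^ γ / (2 ^ (γ - α) - 1) * ((2 : ℝ) ^ L) ^ (γ - α) := by
  have hr : (1 : ℝ) < 2 ^ (γ - α) := one_lt_rpow (by norm_num) (by linarith)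
  have hterm : ∀ k : ℕ, ((2 : ℝ) ^ k) ^ (-α) * ((2 : ℝ) ^ (k + 1)) ^ γ =
      2 ^ γ * ((2 : ℝ) ^ (γ - α)) ^ k := by
    intro k
    simp only [← rpow_natCast, ← rpow_mul (show (0 : ℝ) ≤ 2 by norm_num), ← rpow_add two_pos]
    congr 1
    push_cast
    ring
  rw [← rpow_natCast (2 : ℝ) L, ← rpow_mul (by norm_num), mul_comm (L : ℝ), rpow_mul (by norm_num),
    rpow_natCast]
  simp_rw [hterm, ← mul_sum, geom_sum_eq hr.ne']
  rw [div_mul_eq_mul_div, mul_div_assoc]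
  gcongr
  linarith

lemma rpow_neg_le_dyadic_sum {y α : ℝ} (hy : 1 ≤ y) (hα : 0 ≤ α) (L : ℕ) :
    y ^ (-α) ≤ ((2 : ℝ) ^ L) ^ (-α) +
      ∑ k ∈ range L, ((2 : ℝ) ^ k) ^ (-α) * (Set.Iic ((2 : ℝ) ^ (k + 1))).indicator 1 y := by
  induction L with
  | zero => simpa using rpow_le_one_of_one_le_of_nonpos hy (neg_nonpos.2 hα)
  | succ L ih =>
    rw [sum_range_succ]
    by_cases hyL : y ≤ 2 ^ (L + 1)
    · rw [Set.indicator_of_mem (Set.mem_Iic.2 hyL), Pi.one_apply, mul_one]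
      have : 0 ≤ ((2 : ℝ) ^ (L + 1)) ^ (-α) := by positivity
      linarith
    · have hmono : y ^ (-α) ≤ ((2 : ℝ) ^ (L + 1)) ^ (-α) :=
        rpow_le_rpow_of_nonpos (by positivity) (not_le.1 hyL).le (neg_nonpos.2 hα)
      have : 0 ≤ ∑ k ∈ range L, ((2 : ℝ) ^ k) ^ (-α) *
          (Set.Iic ((2 : ℝ) ^ (k + 1))).indicator 1 y :=
        sum_nonneg fun k _ => mul_nonneg (by positivity) (Set.indicator_nonneg (by simp) _)
      rw [Set.indicator_of_notMem (by simpa using hyL), mul_zero]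
      linarith

section

variable {Ω : Type*} [MeasurableSpace Ω] {μ : Measure Ω} [IsProbabilityMeasure μ]

lemma integral_rpow_neg_le_dyadic_sum {Y : Ω → ℝ} (hY : Measurable Y) (hY1 : ∀ ω, 1 ≤ Y ω)
    {α : ℝ} (hα : 0 ≤ α) (L : ℕ) :
    ∫ ω, Y ω ^ (-α) ∂μ ≤ ((2 : ℝ) ^ L) ^ (-α) +
      ∑ k ∈ range L, ((2 : ℝ) ^ k) ^ (-α) * μ.real {ω | Y ω ≤ 2 ^ (k + 1)} := by
  have hmeas : ∀ k : ℕ, MeasurableSet (Y ⁻¹' Set.Iic ((2 : ℝ) ^ (k + 1))) :=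
    fun k => hY measurableSet_Iic
  have hint : ∀ k : ℕ, Integrable ((Y ⁻¹' Set.Iic ((2 : ℝ) ^ (k + 1))).indicator 1) μ :=
    fun k => (integrable_const (1 : ℝ)).indicator (hmeas k)
  calc ∫ ω, Y ω ^ (-α) ∂μ
      ≤ ∫ ω, (((2 : ℝ) ^ L) ^ (-α) + ∑ k ∈ range L, ((2 : ℝ) ^ k) ^ (-α) *
          (Y ⁻¹' Set.Iic ((2 : ℝ) ^ (k + 1))).indicator 1 ω) ∂μ := by
        refine integral_mono_of_nonneg (ae_of_all _ fun ω => ?_) ?_ (ae_of_all _ fun ω => ?_)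
        · exact rpow_nonneg (zero_le_one.trans (hY1 ω)) _
        · exact (integrable_const _).add (integrable_finsetSum _ fun k _ => (hint k).const_mul _)
        · simpa only [← Set.indicator_comp_right, Pi.one_comp] using
            rpow_neg_le_dyadic_sum (hY1 ω) hα L
    _ = _ := by
        rw [integral_add (integrable_const _) (integrable_finsetSum _ fun k _ =>
          (hint k).const_mul _), integral_finsetSum _ fun k _ => (hint k).const_mul _]
        simp only [integral_const, probReal_univ, one_smul, integral_const_mul,
          integral_indicator_one (hmeas _)]
        rfl

lemma integral_rpow_neg_le_of_measureReal_le {Y : Ω → ℝ} (hY : Measurable Y)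
    (hY1 : ∀ ω, 1 ≤ Y ω) {α γ K : ℝ} (hα : 0 ≤ α) (hαγ : α < γ) (hK : 0 < K)
    (hsmall : ∀ t ≥ 1, μ.real {ω | Y ω ≤ t} ≤ K * t ^ γ) :
    ∫ ω, Y ω ^ (-α) ∂μ ≤ negMomentConst α γ * K ^ (α / γ) := by
  have hγ : 0 < γ := hα.trans_lt hαγ
  have hr : (1 : ℝ) < 2 ^ (γ - α) := one_lt_rpow (by norm_num) (by linarith)
  by_cases hK1 : 1 ≤ K
  · calc ∫ ω, Y ω ^ (-α) ∂μ ≤ 1 := by simpa using integral_rpow_neg_le_dyadic_sum hY hY1 hα 0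
      _ ≤ K ^ (α / γ) := one_le_rpow hK1 (by positivity)
      _ ≤ _ := le_mul_of_one_le_left (by positivity) (one_le_negMomentConst hαγ)
  -- Cut the dyadic sum at the first power of `2` above `u = K ^ (-1/γ)`.
  set u := K ^ (-γ⁻¹) with hu
  have hu1 : 1 < u := one_lt_rpow_of_pos_of_lt_one_of_neg hK (not_le.1 hK1) (by simpa using hγ)
  have hu0 : 0 < u := one_pos.trans hu1
  have hua : u ^ (-α) = K ^ (α / γ) := by
    rw [hu, ← rpow_mul hK.le]
    congr 1
    field_simp
  have hKu : K * u ^ (γ - α) = u ^ (-α) := by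
    have huγ : u ^ γ = K⁻¹ := by
      rw [hu, ← rpow_mul hK.le, neg_mul, inv_mul_cancel₀ hγ.ne', rpow_neg_one]
    rw [sub_eq_add_neg, rpow_add hu0, huγ, ← mul_assoc, mul_inv_cancel₀ hK.ne', one_mul]
  obtain ⟨n, hn, hn'⟩ := exists_nat_pow_near hu1.le one_lt_two
  have hL : (2 : ℝ) ^ (n + 1) ≤ 2 * u := by rw [pow_succ']; linarith
  calc ∫ ω, Y ω ^ (-α) ∂μ
      ≤ ((2 : ℝ) ^ (n + 1)) ^ (-α) +
          ∑ k ∈ range (n + 1), ((2 : ℝ) ^ k) ^ (-α) * μ.real {ω | Y ω ≤ 2 ^ (k + 1)} :=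
        integral_rpow_neg_le_dyadic_sum hY hY1 hα (n + 1)
    _ ≤ u ^ (-α) + ∑ k ∈ range (n + 1), ((2 : ℝ) ^ k) ^ (-α) * (K * ((2 : ℝ) ^ (k + 1)) ^ γ) := by
        refine add_le_add (rpow_le_rpow_of_nonpos hu0 hn'.le (by linarith)) ?_
        exact sum_le_sum fun k _ =>
          mul_le_mul_of_nonneg_left (hsmall _ (one_le_pow₀ one_le_two)) (by positivity)
    _ = u ^ (-α) + K * ∑ k ∈ range (n + 1), ((2 : ℝ) ^ k) ^ (-α) * ((2 : ℝ) ^ (k + 1)) ^ γ := by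
        rw [mul_sum]
        exact congrArg _ (sum_congr rfl fun k _ => by ring)
    _ ≤ u ^ (-α) + K * (2 ^ γ / (2 ^ (γ - α) - 1) * (2 * u) ^ (γ - α)) := by
        have : 0 ≤ (2 : ℝ) ^ γ / (2 ^ (γ - α) - 1) := div_nonneg (by positivity) (by linarith)
        gcongr
        refine (sum_dyadic_rpow_le hαγ _).trans ?_
        gcongr
    _ = _ := by
        rw [negMomentConst, mul_rpow zero_le_two hu0.le, ← hua, ← hKu]
        ring

end

lemma exp_neg_le_factorial_div_pow {x : ℝ} (hx : 0 < x) (m : ℕ) : exp (-x) ≤ m ! / x ^ m := by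
  rw [exp_neg, ← one_div, div_le_div_iff₀ (exp_pos x) (by positivity), one_mul]
  exact (div_le_iff₀' (by positivity)).1 (pow_div_factorial_le_exp _ hx.le m)

lemma pow_le_exp_neg_mul {p q : ℝ} (hq0 : 0 ≤ q) (hq : q ≤ 1 - p) (n : ℕ) :
    q ^ n ≤ exp (-(n * p)) :=
  calc q ^ n ≤ exp (-p) ^ n := pow_le_pow_left₀ hq0 (hq.trans (one_sub_le_exp_neg p)) n
    _ = exp (-(n * p)) := by rw [← exp_nat_mul, mul_neg]

lemma pow_le_factorial_div_mul_rpow {q c β t : ℝ} {n : ℕ} (hn : 0 < n) (hc : 0 < c)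
    (ht : 0 < t) (hq0 : 0 ≤ q) (hq : q ≤ 1 - c * t ^ (-β)) (m : ℕ) :
    q ^ n ≤ m ! / (c * n) ^ m * t ^ (β * m) := by
  have hp : 0 < n * (c * t ^ (-β)) := by positivity
  calc q ^ n ≤ exp (-(n * (c * t ^ (-β)))) := pow_le_exp_neg_mul hq0 hq n
    _ ≤ m ! / (n * (c * t ^ (-β))) ^ m := exp_neg_le_factorial_div_pow hp m
    _ = m ! / (c * n) ^ m * t ^ (β * m) := by
      rw [rpow_mul ht.le, rpow_natCast, rpow_neg ht.le]
      simp only [mul_pow, inv_pow, div_eq_mul_inv, mul_inv, inv_inv]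
      ring

lemma div_mul_pow_rpow {a c x α β : ℝ} {m : ℕ} (ha : 0 ≤ a) (hc : 0 ≤ c) (hx : 0 ≤ x)
    (hβ : β ≠ 0) (hm : (m : ℝ) ≠ 0) :
    (a / (c * x) ^ m) ^ (α / (β * m)) = (a / c ^ m) ^ (α / (β * m)) * x ^ (-(α / β)) := by
  rw [mul_pow, div_mul_eq_div_div, div_eq_mul_inv _ (x ^ m),
    mul_rpow (by positivity) (by positivity), inv_rpow (by positivity), ← rpow_natCast x m,
    ← rpow_mul hx, rpow_neg hx]
  congr 3
  field_simp

section

variable {Ω : Type*} [MeasurableSpace Ω] {μ : Measure Ω}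

lemma measure_biInter_preimage_eq_pow {E : Type*} [MeasurableSpace E] {X : ℕ → Ω → E}
    (hind : iIndepFun X μ) (hid : ∀ j, IdentDistrib (X j) (X 0) μ μ) {s : Set E}
    (hs : MeasurableSet s) (n : ℕ) :
    μ (⋂ j ∈ range n, X j ⁻¹' s) = μ (X 0 ⁻¹' s) ^ n := by
  rw [hind.meas_biInter fun j _ => ⟨s, hs, rfl⟩,
    prod_congr rfl fun j _ => (hid j).measure_mem_eq hs, prod_const, card_range]

variable [IsProbabilityMeasure μ]

lemma measureReal_sum_le_le_pow {X : ℕ → Ω → ℝ} (hX0 : ∀ j ω, 0 ≤ X j ω)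
    (hind : iIndepFun X μ) (hid : ∀ j, IdentDistrib (X j) (X 0) μ μ) (n : ℕ) (t : ℝ) :
    μ.real {ω | ∑ j ∈ range n, X j ω ≤ t} ≤ μ.real {ω | X 0 ω ≤ t} ^ n := by
  have hsub : {ω | ∑ j ∈ range n, X j ω ≤ t} ⊆ ⋂ j ∈ range n, X j ⁻¹' Set.Iic t := by
    intro ω hω
    simp only [Set.mem_iInter, Set.mem_preimage, Set.mem_Iic]
    exact fun j hj => (single_le_sum (fun i _ => hX0 i ω) hj).trans hω
  calc μ.real {ω | ∑ j ∈ range n, X j ω ≤ t} ≤ μ.real (⋂ j ∈ range n, X j ⁻¹' Set.Iic t) :=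
        measureReal_mono hsub
    _ = μ.real {ω | X 0 ω ≤ t} ^ n := by
        rw [measureReal_def, measure_biInter_preimage_eq_pow hind hid measurableSet_Iic,
          ENNReal.toReal_pow]
        rfl

lemma exists_measureReal_le_le_one_sub_rpow {X : Ω → ℝ} (hX : Measurable X) {C β x₀ : ℝ}
    (hC : 0 < C) (htail : ∀ x, x₀ ≤ x → C * x ^ (-β) ≤ μ.real {ω | x < X ω}) :
    ∃ c > 0, ∀ t ≥ 1, μ.real {ω | X ω ≤ t} ≤ 1 - c * t ^ (-β) := by
  set x₁ := max x₀ 1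
  have hx₁ : 0 < x₁ := lt_max_of_lt_right one_pos
  refine ⟨C * x₁ ^ (-β), by positivity, fun t ht => ?_⟩
  have hx₁t : x₁ ≤ x₁ * t := le_mul_of_one_le_right hx₁.le ht
  calc μ.real {ω | X ω ≤ t} ≤ μ.real {ω | X ω ≤ x₁ * t} :=
        measureReal_mono fun ω (hω : X ω ≤ t) =>
          hω.trans (le_mul_of_one_le_left (by linarith) (le_max_right _ _))
    _ = 1 - μ.real {ω | x₁ * t < X ω} := by
        rw [← probReal_compl_eq_one_sub (measurableSet_lt measurable_const hX)]
        simp only [Set.compl_ofPred, not_lt]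
    _ ≤ 1 - C * (x₁ * t) ^ (-β) := by
        linarith [htail (x₁ * t) ((le_max_left _ _).trans hx₁t)]
    _ = 1 - C * x₁ ^ (-β) * t ^ (-β) := by
        rw [mul_rpow hx₁.le (by linarith), mul_assoc]

lemma measureReal_sum_le_le_factorial_div_mul_rpow {X : ℕ → Ω → ℝ} (hX0 : ∀ j ω, 0 ≤ X j ω)
    (hind : iIndepFun X μ) (hid : ∀ j, IdentDistrib (X j) (X 0) μ μ) {c β : ℝ} (hc : 0 < c)
    (hX : ∀ t ≥ 1, μ.real {ω | X 0 ω ≤ t} ≤ 1 - c * t ^ (-β)) {n : ℕ} (hn : 0 < n) (m : ℕ)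
    {t : ℝ} (ht : 1 ≤ t) :
    μ.real {ω | ∑ j ∈ range n, X j ω ≤ t} ≤ m ! / (c * n) ^ m * t ^ (β * m) :=
  (measureReal_sum_le_le_pow hX0 hind hid n t).trans
    (pow_le_factorial_div_mul_rpow hn hc (by linarith) measureReal_nonneg (hX t ht) m)

end

theorem negative_moment_random_walk_heavy_tail_general
    {Ω : Type*} [MeasureSpace Ω] [IsProbabilityMeasure (ℙ : Measure Ω)]
    (Δ : ℕ → Ω → ℕ)
    (hΔmeas : ∀ j, Measurable (Δ j))
    (hΔpos : ∀ j ω, 1 ≤ Δ j ω)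
    (hΔindep : iIndepFun Δ)
    (hΔid : ∀ i j, IdentDistrib (Δ i) (Δ j))
    (β : ℝ) (hβ0 : 0 < β)
    (C : ℝ) (hC : 0 < C)
    (x₀ : ℝ) (htail : ∀ x : ℝ, x₀ ≤ x →
      C * x ^ (-β) ≤ ((ℙ : Measure Ω) {ω | x < (Δ 0 ω : ℝ)}).toReal)
    (α : ℝ) (hα0 : 0 < α)
    (T : ℕ → Ω → ℕ) (hT : ∀ n ω, T n ω = ∑ j ∈ Finset.range n, Δ j ω) :
    ∃ C' : ℝ, 0 < C' ∧ ∀ᶠ h : ℕ in atTop,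
      ∫ ω, (T h ω : ℝ) ^ (-α) ≤ C' * (h : ℝ) ^ (-(α / β)) := by
  set X : ℕ → Ω → ℝ := fun j ω => Δ j ω
  have hX : ∀ j, Measurable (X j) := fun j => measurable_from_nat.comp (hΔmeas j)
  have hT' : ∀ n ω, (T n ω : ℝ) = ∑ j ∈ range n, X j ω := fun n ω => by simp [X, hT]
  obtain ⟨c, hc, hcdf⟩ := exists_measureReal_le_le_one_sub_rpow (hX 0) hC htail
  obtain ⟨m, hm⟩ := exists_nat_gt (α / β)
  have hαβm : α < β * m := by rwa [div_lt_iff₀ hβ0, mul_comm] at hm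
  refine ⟨negMomentConst α (β * m) * (m ! / c ^ m) ^ (α / (β * m)),
    mul_pos (one_pos.trans_le (one_le_negMomentConst hαβm)) (by positivity), ?_⟩
  filter_upwards [eventually_ge_atTop 1] with h hh
  have hsmall : ∀ t ≥ 1, (ℙ : Measure Ω).real {ω | (T h ω : ℝ) ≤ t} ≤
      m ! / (c * h) ^ m * t ^ (β * m) := fun t ht => by
    simpa only [hT'] using measureReal_sum_le_le_factorial_div_mul_rpow
      (fun j ω => Nat.cast_nonneg _) (hΔindep.comp (fun _ => Nat.cast) fun _ => measurable_from_nat)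
      (fun j => (hΔid j 0).comp measurable_from_nat) hc hcdf hh m ht
  have hT1 : ∀ ω, 1 ≤ (T h ω : ℝ) := fun ω => by
    rw [Nat.one_le_cast, hT]
    exact (hΔpos 0 ω).trans
      (single_le_sum (f := fun j => Δ j ω) (fun _ _ => Nat.zero_le _) (mem_range.2 hh))
  have hTmeas : Measurable fun ω => (T h ω : ℝ) := by
    simp only [hT']
    exact Finset.measurable_sum _ fun j _ => hX j
  calc ∫ ω, (T h ω : ℝ) ^ (-α)
        ≤ negMomentConst α (β * m) * (m ! / (c * h) ^ m) ^ (α / (β * m)) :=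
        integral_rpow_neg_le_of_measureReal_le hTmeas hT1 hα0.le hαβm (by positivity) hsmall
    _ = _ := by
        rw [div_mul_pow_rpow (by positivity) hc.le (by positivity) hβ0.ne'
          ((div_pos hα0 hβ0).trans hm).ne', mul_assoc]

/-- If the i.i.d. positive-integer increments satisfy `P(Δ₁ > x) ≥ C x^{-β}` for all
large `x`, with `β ∈ (0,1)`, then for `0 < α < 1` one has
`E[T_h^{-α}] ≤ C' h^{-α/β}` for some `C'` and all large `h`. -/
theorem negative_moment_random_walk_heavy_tail
    {Ω : Type*} [MeasureSpace Ω] [IsProbabilityMeasure (ℙ : Measure Ω)]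
    (Δ : ℕ → Ω → ℕ)
    (hΔmeas : ∀ j, Measurable (Δ j))
    (hΔpos : ∀ j ω, 1 ≤ Δ j ω)
    (hΔindep : iIndepFun Δ)
    (hΔid : ∀ i j, IdentDistrib (Δ i) (Δ j))
    (β : ℝ) (hβ0 : 0 < β) (hβ1 : β < 1)
    (C : ℝ) (hC : 0 < C)
    (x₀ : ℝ) (htail : ∀ x : ℝ, x₀ ≤ x →
      C * x ^ (-β) ≤ ((ℙ : Measure Ω) {ω | x < (Δ 0 ω : ℝ)}).toReal)
    (α : ℝ) (hα0 : 0 < α) (hα1 : α < 1)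
    (T : ℕ → Ω → ℕ) (hT : ∀ n ω, T n ω = ∑ j ∈ Finset.range n, Δ j ω) :
    ∃ C' : ℝ, 0 < C' ∧ ∀ᶠ h : ℕ in atTop,
      ∫ ω, (T h ω : ℝ) ^ (-α) ≤ C' * (h : ℝ) ^ (-(α / β)) :=
  negative_moment_random_walk_heavy_tail_general Δ hΔmeas hΔpos hΔindep hΔid β hβ0 C hC x₀ htail α
    hα0 T hT
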